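/- Let X and H be elements of a (not necessarily commutative) ring, and let n ≥ 1 and 1 ≤ k ≤ n. Then (X + H)^n − Σ_{ℓ=0}^{k−1} (Σ_{(a_0,…,a_ℓ): a_i ≥ 0, a_0+⋯+a_ℓ = n−ℓ} X^{a_0} H X^{a_1} H ⋯ H X^{a_ℓ}) = Σ_{(a_0,…,a_k): a_i ≥ 0, a_0+⋯+a_k = n−k} (X + H)^{a_0} H X^{a_1} H ⋯ H X^{a_k}. (The subtracted ℓ-th inner sum is the ℓ-th Taylor term (1/ℓ!) d^ℓ (X + tH)^n/dt^ℓ |_{t=0}.) -/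

import Mathlib

/-!
Write `T_ℓ(Y, m) = ∑_{a_0+⋯+a_ℓ = m} Y^{a_0} H X^{a_1} H ⋯ H X^{a_ℓ}`. Expanding the leading
factor of each word of the remainder `T_k(X + H, m + 1)` by the noncommutative telescoping
identity `(X + H)^(p+1) = X^(p+1) + ∑_{i+j=p} (X + H)^i H X^j` splits it into the Taylor term
`T_k(X, m + 1)` and the next remainder `T_{k+1}(X + H, m)`. Induction on `k`, starting from
`(X + H)^n = T_0(X + H, n)`, finishes the proof.
-/

open Finset

theorem Finset.Nat.sum_antidiagonalTuple_succ {M : Type*} [AddCommMonoid M] (k n : ℕ)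
    (f : (Fin (k + 1) → ℕ) → M) :
    ∑ a ∈ Nat.antidiagonalTuple (k + 1) n, f a =
      ∑ p ∈ antidiagonal n, ∑ t ∈ Nat.antidiagonalTuple k p.2, f (Fin.cons p.1 t) := by
  -- on lists, `antidiagonalTuple (k + 1) n` is by definition a `flatMap` of `Fin.cons`
  change ((List.Nat.antidiagonalTuple (k + 1) n).map f).sum =
    ((List.Nat.antidiagonal n).map fun p =>
      ∑ t ∈ Nat.antidiagonalTuple k p.2, f (Fin.cons p.1 t)).sum
  simp [List.Nat.antidiagonalTuple, List.flatMap, List.sum_flatten, Function.comp_def]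
  rfl

theorem Finset.sum_antidiagonal_antidiagonal_assoc {A M : Type*} [AddMonoid A]
    [HasAntidiagonal A] [AddCommMonoid M] (n : A) (f : A → A → A → M) :
    ∑ p ∈ antidiagonal n, ∑ q ∈ antidiagonal p.1, f q.1 q.2 p.2 =
      ∑ p ∈ antidiagonal n, ∑ q ∈ antidiagonal p.2, f p.1 q.1 q.2 := by
  simp only [Finset.sum_sigma']
  apply Finset.sum_nbij' (fun ⟨⟨_, j⟩, ⟨k, l⟩⟩ ↦ ⟨(k, l + j), (l, j)⟩)
    (fun ⟨⟨i, _⟩, ⟨k, l⟩⟩ ↦ ⟨(i + k, l), (i, k)⟩) <;> aesop (add simp [add_assoc])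

theorem add_pow_succ_eq_pow_add_sum {R : Type*} [Semiring R] (X H : R) (m : ℕ) :
    (X + H) ^ (m + 1) = X ^ (m + 1) + ∑ p ∈ antidiagonal m, (X + H) ^ p.1 * H * X ^ p.2 := by
  induction m with
  | zero => simp
  | succ m ih =>
    rw [Nat.sum_antidiagonal_succ', pow_succ (X + H) (m + 1), mul_add]
    nth_rw 1 [ih]
    simp only [add_mul, sum_mul, pow_zero, mul_one, pow_succ, mul_assoc]
    abel

section Words

variable {R : Type*} [Semiring R]

/-- `wordSum X X H ℓ (n - ℓ)` is the `ℓ`-th Taylor term of `t ↦ (X + tH)^n` at `0`, and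
`wordSum (X + H) X H k (n - k)` is the remainder after `k` terms. -/
def wordSum (Y X H : R) (k m : ℕ) : R :=
  ∑ a ∈ Nat.antidiagonalTuple (k + 1) m,
    Y ^ a 0 * (List.ofFn fun i : Fin k => H * X ^ a i.succ).prod

def tailSum (X H : R) (k m : ℕ) : R :=
  ∑ t ∈ Nat.antidiagonalTuple k m, (List.ofFn fun i : Fin k => H * X ^ t i).prod

theorem wordSum_zero (Y X H : R) (m : ℕ) : wordSum Y X H 0 m = Y ^ m := by
  simp [wordSum]

theorem wordSum_eq_sum_antidiagonal (Y X H : R) (k m : ℕ) :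
    wordSum Y X H k m = ∑ p ∈ antidiagonal m, Y ^ p.1 * tailSum X H k p.2 := by
  simp [wordSum, tailSum, Nat.sum_antidiagonalTuple_succ, mul_sum]

theorem tailSum_succ (X H : R) (k m : ℕ) :
    tailSum X H (k + 1) m = ∑ p ∈ antidiagonal m, H * X ^ p.1 * tailSum X H k p.2 := by
  simp [tailSum, Nat.sum_antidiagonalTuple_succ, List.ofFn_succ, mul_sum]

theorem wordSum_add_succ (X H : R) (k m : ℕ) :
    wordSum (X + H) X H k (m + 1) =
      wordSum X X H k (m + 1) + wordSum (X + H) X H (k + 1) m := by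
  simp only [wordSum_eq_sum_antidiagonal, Nat.sum_antidiagonal_succ, add_pow_succ_eq_pow_add_sum,
    add_mul, sum_add_distrib, sum_mul, add_assoc, tailSum_succ, mul_sum, mul_assoc]
  rw [pow_zero, pow_zero,
    sum_antidiagonal_antidiagonal_assoc m fun i j l =>
      (X + H) ^ i * (H * (X ^ j * tailSum X H k l))]

theorem add_pow_eq_sum_wordSum_add (X H : R) {n k : ℕ} (hkn : k ≤ n) :
    (X + H) ^ n = ∑ ℓ ∈ range k, wordSum X X H ℓ (n - ℓ) + wordSum (X + H) X H k (n - k) := by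
  induction k with
  | zero => simp [wordSum_zero]
  | succ k ih =>
    obtain ⟨m, hm⟩ : ∃ m, n - k = m + 1 := ⟨n - k - 1, by omega⟩
    have hm' : n - (k + 1) = m := by omega
    rw [ih (by omega), sum_range_succ, hm, hm', wordSum_add_succ, add_assoc]

end Words

theorem pow_taylor_remainder_general {R : Type*} [Ring R] (X H : R)
    (n k : ℕ) (hkn : k ≤ n) :
    (X + H) ^ n -
        ∑ ℓ ∈ Finset.range k,
          ∑ a ∈ Finset.Nat.antidiagonalTuple (ℓ + 1) (n - ℓ),
            (List.ofFn fun i : Fin (ℓ + 1) =>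
              (if (i : ℕ) = 0 then 1 else H) * X ^ a i).prod =
      ∑ a ∈ Finset.Nat.antidiagonalTuple (k + 1) (n - k),
        (X + H) ^ a 0 * (List.ofFn fun i : Fin k => H * X ^ a i.succ).prod := by
  have first_letter (ℓ : ℕ) (a : Fin (ℓ + 1) → ℕ) :
      (List.ofFn fun i : Fin (ℓ + 1) => (if (i : ℕ) = 0 then 1 else H) * X ^ a i).prod =
        X ^ a 0 * (List.ofFn fun i : Fin ℓ => H * X ^ a i.succ).prod := by
    simp [List.ofFn_succ]
  simp only [first_letter]
  rw [sub_eq_iff_eq_add']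
  exact add_pow_eq_sum_wordSum_add X H hkn

/-- **Taylor remainder identity for the monomial `x ↦ x^n` in a noncommutative ring.**

For elements `X, H` of a (not necessarily commutative) ring and `1 ≤ k ≤ n`,
`(X + H)^n − ∑_{ℓ<k} ∑_{a_0+⋯+a_ℓ = n−ℓ} X^{a_0} H X^{a_1} H ⋯ H X^{a_ℓ}
  = ∑_{a_0+⋯+a_k = n−k} (X + H)^{a_0} H X^{a_1} H ⋯ H X^{a_k}`,
where the inner sums run over tuples of nonnegative integers with the indicated sums;
the subtracted `ℓ`-th inner sum is the `ℓ`-th Taylor term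
`(1/ℓ!) dℓ(X + tH)^n/dtℓ |_{t=0}`. -/
theorem pow_taylor_remainder {R : Type*} [Ring R] (X H : R)
    (n k : ℕ) (hn : 1 ≤ n) (hk : 1 ≤ k) (hkn : k ≤ n) :
    (X + H) ^ n -
        ∑ ℓ ∈ Finset.range k,
          ∑ a ∈ Finset.Nat.antidiagonalTuple (ℓ + 1) (n - ℓ),
            (List.ofFn fun i : Fin (ℓ + 1) =>
              (if (i : ℕ) = 0 then 1 else H) * X ^ a i).prod =
      ∑ a ∈ Finset.Nat.antidiagonalTuple (k + 1) (n - k),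
        (X + H) ^ a 0 * (List.ofFn fun i : Fin k => H * X ^ a i.succ).prod :=
  pow_taylor_remainder_general X H n k hkn
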